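/- Let w(x) = ⟨x²,x⟩/|x| for the algebra V(u) of a cubic form u on ℝⁿ. Then the Laplacian of w at x ≠ 0 is Δw(x) = (6/|x|)trace L_x − (n+3)⟨x²,x⟩/|x|³. In particular, if trace L_x = 0 for all x, then Δw(x) = −(n+3)w(x)/|x|². -/

import Mathlib

/-!
Because `⟪x h, v⟫ = ⟪h, x v⟫`, the gradient of `w` at `x ≠ 0` is `3 x² / |x| - ⟪x², x⟫ x / |x|³`.
Differentiating once more in a direction `v` gives a quadratic form in `v`. Summed over an
orthonormal basis `eᵢ`, Parseval gives `∑ ⟪x², eᵢ⟫⟪x, eᵢ⟫ = ⟪x², x⟫`, `∑ ⟪x, eᵢ⟫² = |x|²` and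
`∑ |eᵢ|² = n`, while `∑ ⟪x eᵢ, eᵢ⟫ = trace L_x`.
-/

open Filter Topology RealInnerProductSpace

variable {E : Type*} [NormedAddCommGroup E] [InnerProductSpace ℝ E] {x : E}

theorem hasFDerivAt_norm_of_ne_zero (hx : x ≠ 0) :
    HasFDerivAt (‖·‖) (‖x‖⁻¹ • innerSL ℝ x) x := by
  have hsq : ‖x‖ ^ 2 ≠ 0 := by positivity
  convert (hasStrictFDerivAt_norm_sq x).hasFDerivAt.sqrt hsq using 1
  · simp only [Real.sqrt_sq (norm_nonneg _)]
  · rw [Real.sqrt_sq (norm_nonneg _), ← ofNat_smul_eq_nsmul ℝ, smul_smul]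
    field_simp

theorem hasFDerivAt_norm_zpow (hx : x ≠ 0) (m : ℤ) :
    HasFDerivAt (‖·‖ ^ m) ((m * ‖x‖ ^ (m - 2)) • innerSL ℝ x) x := by
  have hnx : ‖x‖ ≠ 0 := norm_ne_zero_iff.2 hx
  refine ((hasDerivAt_zpow m ‖x‖ (.inl hnx)).comp_hasFDerivAt x
    (hasFDerivAt_norm_of_ne_zero hx)).congr_fderiv ?_
  rw [smul_smul, mul_assoc, ← zpow_neg_one, ← zpow_add₀ hnx]
  ring_nf

section
variable (B : E →L[ℝ] E →L[ℝ] E) (hcomm : ∀ x y, B x y = B y x)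
  (hassoc : ∀ x y z, ⟪B x y, z⟫ = ⟪x, B y z⟫)
include hcomm

theorem hasFDerivAt_apply_self (x : E) :
    HasFDerivAt (fun z => B z z) ((2 : ℝ) • B x) x := by
  refine (B.hasFDerivAt_of_bilinear (hasFDerivAt_id x) (hasFDerivAt_id x)).congr_fderiv ?_
  ext v
  simp [two_smul, hcomm v x]

include hassoc

theorem inner_apply_left_eq_inner_apply_right (x h v : E) : ⟪B x h, v⟫ = ⟪h, B x v⟫ := by
  rw [hcomm, hassoc]

theorem hasFDerivAt_inner_apply_self_left (x v : E) :
    HasFDerivAt (fun z => ⟪B z z, v⟫) ((2 : ℝ) • innerSL ℝ (B x v)) x := by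
  refine ((hasFDerivAt_apply_self B hcomm x).inner ℝ (hasFDerivAt_const v x)).congr_fderiv ?_
  ext h
  simp only [fderivInnerCLM_apply, ContinuousLinearMap.comp_apply, ContinuousLinearMap.prod_apply,
    FunLike.coe_smul, Pi.smul_apply, zero_apply, inner_zero_right, zero_add, real_inner_smul_left,
    innerSL_apply_apply, smul_eq_mul]
  rw [inner_apply_left_eq_inner_apply_right B hcomm hassoc x h v, real_inner_comm h]

theorem hasFDerivAt_inner_apply_self_self (x : E) :
    HasFDerivAt (fun z => ⟪B z z, z⟫) ((3 : ℝ) • innerSL ℝ (B x x)) x := by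
  refine ((hasFDerivAt_apply_self B hcomm x).inner ℝ (hasFDerivAt_id x)).congr_fderiv ?_
  ext h
  simp only [fderivInnerCLM_apply, ContinuousLinearMap.comp_apply, ContinuousLinearMap.prod_apply,
    FunLike.coe_smul, Pi.smul_apply, ContinuousLinearMap.coe_id', id_eq, real_inner_smul_left,
    innerSL_apply_apply, smul_eq_mul]
  rw [inner_apply_left_eq_inner_apply_right B hcomm hassoc x h x, real_inner_comm h]
  ring

theorem hasFDerivAt_inner_apply_self_self_div_norm (hx : x ≠ 0) :
    HasFDerivAt (fun z => ⟪B z z, z⟫ / ‖z‖)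
      ((3 * ‖x‖ ^ (-1 : ℤ)) • innerSL ℝ (B x x) - (⟪B x x, x⟫ * ‖x‖ ^ (-3 : ℤ)) • innerSL ℝ x)
      x := by
  have hmul := (hasFDerivAt_inner_apply_self_self B hcomm hassoc x).mul
    (hasFDerivAt_norm_zpow hx (-1))
  simp only [zpow_neg_one] at hmul
  refine hmul.congr_fderiv ?_
  ext v
  have hnx : ‖x‖ ≠ 0 := norm_ne_zero_iff.2 hx
  simp only [Int.reduceNeg, Int.cast_neg, Int.cast_one, Int.reduceSub, zpow_neg, zpow_ofNat,
    neg_mul, one_mul, neg_smul, smul_neg, add_apply, neg_apply, smul_apply, coe_innerSL_apply,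
    smul_eq_mul, pow_one, sub_apply]
  field_simp
  ring

theorem fderiv_fderiv_inner_apply_self_self_div_norm (hx : x ≠ 0) (v : E) :
    fderiv ℝ (fun y => fderiv ℝ (fun z => ⟪B z z, z⟫ / ‖z‖) y v) x v =
      6 / ‖x‖ * ⟪B x v, v⟫ - 6 / ‖x‖ ^ 3 * (⟪B x x, v⟫ * ⟪x, v⟫)
        - ⟪B x x, x⟫ / ‖x‖ ^ 3 * ‖v‖ ^ 2 + 3 * ⟪B x x, x⟫ / ‖x‖ ^ 5 * ⟪x, v⟫ ^ 2 := by
  have hgrad : (fun y => fderiv ℝ (fun z => ⟪B z z, z⟫ / ‖z‖) y v) =ᶠ[𝓝 x]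
      fun y => 3 * ‖y‖ ^ (-1 : ℤ) * ⟪B y y, v⟫ - ⟪B y y, y⟫ * ‖y‖ ^ (-3 : ℤ) * ⟪y, v⟫ := by
    filter_upwards [eventually_ne_nhds hx] with y hy
    simp [(hasFDerivAt_inner_apply_self_self_div_norm B hcomm hassoc hy).fderiv]
  have hderiv : HasFDerivAt
      (fun y => 3 * ‖y‖ ^ (-1 : ℤ) * ⟪B y y, v⟫ - ⟪B y y, y⟫ * ‖y‖ ^ (-3 : ℤ) * ⟪y, v⟫) _ x :=
    (((hasFDerivAt_norm_zpow hx (-1)).const_mul 3).mul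
        (hasFDerivAt_inner_apply_self_left B hcomm hassoc x v)).sub
      (((hasFDerivAt_inner_apply_self_self B hcomm hassoc x).mul
        (hasFDerivAt_norm_zpow hx (-3))).mul ((hasFDerivAt_id x).inner ℝ (hasFDerivAt_const v x)))
  rw [hgrad.fderiv_eq, hderiv.fderiv]
  have hnx : ‖x‖ ≠ 0 := norm_ne_zero_iff.2 hx
  simp only [Int.reduceNeg, zpow_neg, zpow_ofNat, pow_one, Int.cast_neg, Int.cast_one,
    Int.reduceSub, neg_mul, one_mul, neg_smul, smul_neg, Pi.mul_apply, id_eq, Int.cast_ofNat,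
    smul_add, sub_apply, add_apply, smul_apply, coe_innerSL_apply, smul_eq_mul, neg_apply,
    ContinuousLinearMap.comp_apply, ContinuousLinearMap.prod_apply, ContinuousLinearMap.id_apply,
    zero_apply, fderivInnerCLM_apply, inner_zero_right, real_inner_self_eq_norm_sq, zero_add]
  field_simp
  ring

theorem sum_fderiv_fderiv_inner_apply_self_self_div_norm {ι : Type*} [Fintype ι]
    (b : OrthonormalBasis ι ℝ E) (hx : x ≠ 0) :
    ∑ i, fderiv ℝ (fun y => fderiv ℝ (fun z => ⟪B z z, z⟫ / ‖z‖) y (b i)) x (b i) =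
      6 / ‖x‖ * LinearMap.trace ℝ E (B x) - (Module.finrank ℝ E + 3) * ⟪B x x, x⟫ / ‖x‖ ^ 3 := by
  have htrace : ∑ i, ⟪B x (b i), b i⟫ = LinearMap.trace ℝ E (B x) := by
    simp [LinearMap.trace_eq_sum_inner _ b, real_inner_comm]
  have hB : ∑ i, ⟪B x x, b i⟫ * ⟪x, b i⟫ = ⟪B x x, x⟫ := by
    simpa [real_inner_comm x] using b.sum_inner_mul_inner (B x x) x
  have hx2 : ∑ i, ⟪x, b i⟫ ^ 2 = ‖x‖ ^ 2 := by
    simpa [sq, real_inner_comm x, real_inner_self_eq_norm_sq] using b.sum_inner_mul_inner x x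
  have hdim : ∑ i, ‖b i‖ ^ 2 = (Module.finrank ℝ E : ℝ) := by
    simp [b.norm_eq_one, Module.finrank_eq_card_basis b.toBasis]
  simp only [fderiv_fderiv_inner_apply_self_self_div_norm B hcomm hassoc hx, Finset.sum_add_distrib,
    Finset.sum_sub_distrib, ← Finset.mul_sum, htrace, hB, hx2, hdim]
  have hnx : ‖x‖ ≠ 0 := norm_ne_zero_iff.2 hx
  field_simp
  ring

end

/-- For `w(x) = ⟪x², x⟫ / ‖x‖` on `ℝⁿ`, the Laplacian satisfies
`Δw(x) = (6/‖x‖) trace L_x − (n+3) ⟪x², x⟫ / ‖x‖³` for `x ≠ 0`; in particular if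
`trace L_x = 0` for all `x`, then `Δw(x) = −(n+3) w(x) / ‖x‖²`. -/
theorem stmt_18 {n : ℕ}
    (mul : EuclideanSpace ℝ (Fin n) →ₗ[ℝ] EuclideanSpace ℝ (Fin n) →ₗ[ℝ]
      EuclideanSpace ℝ (Fin n))
    (hcomm : ∀ x y, mul x y = mul y x)
    (hassoc : ∀ x y z, ⟪mul x y, z⟫ = ⟪x, mul y z⟫)
    (w : EuclideanSpace ℝ (Fin n) → ℝ)
    (hw : ∀ x, w x = ⟪mul x x, x⟫ / ‖x‖)
    (x : EuclideanSpace ℝ (Fin n)) (hx : x ≠ 0) :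
    (∑ i : Fin n, fderiv ℝ (fun y => fderiv ℝ w y (EuclideanSpace.single i 1)) x
        (EuclideanSpace.single i 1) =
      6 / ‖x‖ * LinearMap.trace ℝ _ (mul x) - (n + 3) * ⟪mul x x, x⟫ / ‖x‖ ^ 3) ∧
      ((∀ y, LinearMap.trace ℝ _ (mul y) = 0) →
        ∑ i : Fin n, fderiv ℝ (fun y => fderiv ℝ w y (EuclideanSpace.single i 1)) x
            (EuclideanSpace.single i 1) = -(n + 3) * w x / ‖x‖ ^ 2) := by
  set B := mul.toContinuousBilinearMap
  obtain rfl : w = fun z => ⟪B z z, z⟫ / ‖z‖ := funext hw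
  have hlap := sum_fderiv_fderiv_inner_apply_self_self_div_norm B hcomm hassoc
    (EuclideanSpace.basisFun (Fin n) ℝ) hx
  have hBx : (B x : EuclideanSpace ℝ (Fin n) →ₗ[ℝ] EuclideanSpace ℝ (Fin n)) = mul x := rfl
  simp only [EuclideanSpace.basisFun_apply, finrank_euclideanSpace_fin, hBx] at hlap
  refine ⟨hlap, fun htr => ?_⟩
  have hnx : ‖x‖ ≠ 0 := norm_ne_zero_iff.2 hx
  rw [hlap, htr]
  field_simp
  ring
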